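/- The constant term (cut-off integral) in the asymptotic expansion of ∫_{B(R)}σ(ξ)dξ is independent of the choice of the integer N ≥ N₀ used in the decomposition σ = Σ_{j≤N} χσ_{α-j} + σ^N. -/

import Mathlib

open Real MeasureTheory Filter Finset

section Aux

variable {E : Type*} [NormedAddCommGroup E] [NormedSpace ℝ E] [CompleteSpace E]

private lemma r_eq_zero_iff (p : ℝ × ℝ) : Real.sqrt (p.1 ^ 2 + p.2 ^ 2) = 0 ↔ p = 0 := by
  rw [Real.sqrt_eq_zero (by positivity), Prod.ext_iff]
  simp only [Prod.fst_zero, Prod.snd_zero]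
  constructor
  · intro h
    constructor <;> nlinarith [sq_nonneg p.1, sq_nonneg p.2]
  · rintro ⟨h1, h2⟩
    rw [h1, h2]; ring

private lemma r_cont : Continuous fun p : ℝ × ℝ => Real.sqrt (p.1 ^ 2 + p.2 ^ 2) :=
  ((continuous_fst.pow 2).add (continuous_snd.pow 2)).sqrt

private lemma r_smul (c : ℝ) (hc : 0 ≤ c) (p : ℝ × ℝ) :
    Real.sqrt ((c • p).1 ^ 2 + (c • p).2 ^ 2) = c * Real.sqrt (p.1 ^ 2 + p.2 ^ 2) := by
  have h : (c • p).1 ^ 2 + (c • p).2 ^ 2 = c ^ 2 * (p.1 ^ 2 + p.2 ^ 2) := by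
    simp only [Prod.smul_fst, Prod.smul_snd, smul_eq_mul]; ring
  rw [h, Real.sqrt_mul (sq_nonneg c), Real.sqrt_sq hc]

private lemma norm_le_r (p : ℝ × ℝ) : ‖p‖ ≤ Real.sqrt (p.1 ^ 2 + p.2 ^ 2) := by
  have h1 : |p.1| ≤ Real.sqrt (p.1 ^ 2 + p.2 ^ 2) := by
    rw [← Real.sqrt_sq_eq_abs]
    exact Real.sqrt_le_sqrt (by nlinarith [sq_nonneg p.2])
  have h2 : |p.2| ≤ Real.sqrt (p.1 ^ 2 + p.2 ^ 2) := by
    rw [← Real.sqrt_sq_eq_abs]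
    exact Real.sqrt_le_sqrt (by nlinarith [sq_nonneg p.1])
  simpa [Prod.norm_def, Real.norm_eq_abs] using max_le h1 h2

private lemma cs_ne_zero (θ : ℝ) : ((Real.cos θ, Real.sin θ) : ℝ × ℝ) ≠ 0 := by
  intro h
  rw [Prod.ext_iff] at h
  simp only [Prod.fst_zero, Prod.snd_zero] at h
  nlinarith [Real.cos_sq_add_sin_sq θ, h.1, h.2]

private lemma r_cs (θ : ℝ) :
    Real.sqrt ((Real.cos θ) ^ 2 + (Real.sin θ) ^ 2) = 1 := by
  rw [Real.cos_sq_add_sin_sq, Real.sqrt_one]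

/-- Key computation: for `α + 2 < j`, the function `χ • f` (with `f` positively homogeneous of
degree `α - j`) is integrable on `ℝ²` and its integral equals the unit-ball part minus
`(α-j+2)⁻¹` times the circle integral. -/
private lemma key (α : ℝ) (j : ℕ) (hj : α + 2 < j)
    (f : ℝ × ℝ → E) (χ : ℝ × ℝ → ℝ)
    (hχcont : Continuous χ)
    (hχ0 : ∃ ε > (0:ℝ), ∀ p : ℝ × ℝ, Real.sqrt (p.1 ^ 2 + p.2 ^ 2) < ε → χ p = 0)
    (hχ1 : ∀ p : ℝ × ℝ, 1 ≤ Real.sqrt (p.1 ^ 2 + p.2 ^ 2) → χ p = 1)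
    (hcont : ContinuousOn f {p : ℝ × ℝ | p ≠ 0})
    (hhom : ∀ c : ℝ, 0 < c → ∀ p : ℝ × ℝ, p ≠ 0 →
      f (c • p) = c ^ (α - j) • f p) :
    Integrable (fun p => χ p • f p) ∧
    (∫ p, χ p • f p)
      = (∫ p in {p : ℝ × ℝ | Real.sqrt (p.1 ^ 2 + p.2 ^ 2) ≤ 1}, χ p • f p)
        - (α - ↑j + 2)⁻¹ • ∫ θ in (0:ℝ)..(2 * π), f (Real.cos θ, Real.sin θ) := by
  obtain ⟨ε, hε, h0⟩ := hχ0
  set B : Set (ℝ × ℝ) := {p : ℝ × ℝ | Real.sqrt (p.1 ^ 2 + p.2 ^ 2) ≤ 1} with hBdef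
  have hBclosed : IsClosed B := isClosed_le r_cont continuous_const
  have hBmeas : MeasurableSet B := hBclosed.measurableSet
  -- continuity of the product
  have hgcont : Continuous fun p => χ p • f p := by
    rw [continuous_iff_continuousAt]
    intro p
    rcases eq_or_ne p 0 with rfl | hp
    · have hU : {q : ℝ × ℝ | Real.sqrt (q.1 ^ 2 + q.2 ^ 2) < ε} ∈ nhds (0 : ℝ × ℝ) := by
        apply (isOpen_lt r_cont continuous_const).mem_nhds
        show Real.sqrt ((0:ℝ) ^ 2 + (0:ℝ) ^ 2) < ε
        simpa using hε
      have heq : (fun q : ℝ × ℝ => χ q • f q) =ᶠ[nhds (0 : ℝ × ℝ)] fun _ => (0:E) :=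
        Filter.eventually_of_mem hU fun q hq => by
          show χ q • f q = (0:E); rw [h0 q hq, zero_smul]
      exact continuousAt_const.congr heq.symm
    · exact hχcont.continuousAt.smul (hcont.continuousAt (isOpen_ne.mem_nhds hp))
  -- the unit ball is compact
  have hBcomp : IsCompact B := by
    apply Metric.isCompact_of_isClosed_isBounded hBclosed
    apply (Metric.isBounded_closedBall (x := (0 : ℝ × ℝ)) (r := 1)).subset
    intro p hp
    simp only [Metric.mem_closedBall, dist_zero_right]
    exact (norm_le_r p).trans hp
  have hgB : IntegrableOn (fun p => χ p • f p) B := hgcont.continuousOn.integrableOn_compact hBcomp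
  -- bound on the exterior
  set β : ℝ := (j : ℝ) - α with hβdef
  have hβ : 2 < β := by simp only [hβdef]; linarith
  have hScomp : IsCompact {p : ℝ × ℝ | Real.sqrt (p.1 ^ 2 + p.2 ^ 2) = 1} := by
    apply Metric.isCompact_of_isClosed_isBounded (isClosed_eq r_cont continuous_const)
    apply (Metric.isBounded_closedBall (x := (0 : ℝ × ℝ)) (r := 1)).subset
    intro p hp
    simp only [Metric.mem_closedBall, dist_zero_right]
    exact (norm_le_r p).trans (le_of_eq hp)
  obtain ⟨C, hC⟩ := hScomp.exists_bound_of_continuousOn (hcont.mono (by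
    intro p hp
    simp only [Set.mem_setOf_eq] at hp ⊢
    intro h
    rw [h] at hp
    simp only [Prod.fst_zero, Prod.snd_zero] at hp
    norm_num at hp))
  set C' : ℝ := max C 0 with hC'def
  have hC'0 : 0 ≤ C' := le_max_right _ _
  have hnorm : ∀ p : ℝ × ℝ, 1 < Real.sqrt (p.1 ^ 2 + p.2 ^ 2) →
      ‖f p‖ ≤ (C' * 2 ^ β) * (1 + ‖p‖) ^ (-β) := by
    intro p hp
    set c : ℝ := Real.sqrt (p.1 ^ 2 + p.2 ^ 2) with hcdef
    have hc0 : 0 < c := lt_trans one_pos hp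
    set u : ℝ × ℝ := c⁻¹ • p with hudef
    have hru : Real.sqrt (u.1 ^ 2 + u.2 ^ 2) = 1 := by
      rw [hudef, r_smul c⁻¹ (inv_nonneg.mpr hc0.le) p, ← hcdef, inv_mul_cancel₀ hc0.ne']
    have hu0 : u ≠ 0 := by
      intro h
      rw [(r_eq_zero_iff u).mpr h] at hru
      norm_num at hru
    have hpu : p = c • u := by
      rw [hudef, smul_smul, mul_inv_cancel₀ hc0.ne', one_smul]
    have hfp : ‖f p‖ = c ^ (α - (j:ℝ)) * ‖f u‖ := by
      conv_lhs => rw [hpu, hhom c hc0 u hu0]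
      rw [norm_smul, Real.norm_eq_abs, abs_of_nonneg (Real.rpow_nonneg hc0.le _)]
    have hfu : ‖f u‖ ≤ C' := le_trans (hC u hru) (le_max_left _ _)
    have hcomp : c ^ (α - (j:ℝ)) ≤ 2 ^ β * (1 + ‖p‖) ^ (-β) := by
      have h2c : 1 + ‖p‖ ≤ 2 * c := by
        have := norm_le_r p
        rw [← hcdef] at this
        linarith
      have hpos : (0:ℝ) < 1 + ‖p‖ := by positivity
      have hmono : (2 * c) ^ (α - (j:ℝ)) ≤ (1 + ‖p‖) ^ (α - (j:ℝ)) :=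
        Real.rpow_le_rpow_of_nonpos hpos h2c (by linarith)
      have hsplit : (2 * c) ^ (α - (j:ℝ)) = 2 ^ (α - (j:ℝ)) * c ^ (α - (j:ℝ)) :=
        Real.mul_rpow (by norm_num) hc0.le
      have h2cancel : (2:ℝ) ^ β * 2 ^ (α - (j:ℝ)) = 1 := by
        rw [← Real.rpow_add (by norm_num : (0:ℝ) < 2)]
        simp [hβdef]
      have hneg : -β = α - (j:ℝ) := by rw [hβdef]; ring
      calc c ^ (α - (j:ℝ)) = 2 ^ β * ((2 * c) ^ (α - (j:ℝ))) := by
            rw [hsplit, ← mul_assoc, h2cancel, one_mul]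
        _ ≤ 2 ^ β * (1 + ‖p‖) ^ (α - (j:ℝ)) := by
            apply mul_le_mul_of_nonneg_left hmono (Real.rpow_nonneg (by norm_num) _)
        _ = 2 ^ β * (1 + ‖p‖) ^ (-β) := by rw [hneg]
    calc ‖f p‖ = c ^ (α - (j:ℝ)) * ‖f u‖ := hfp
      _ ≤ c ^ (α - (j:ℝ)) * C' := mul_le_mul_of_nonneg_left hfu (Real.rpow_nonneg hc0.le _)
      _ ≤ (2 ^ β * (1 + ‖p‖) ^ (-β)) * C' := by
          apply mul_le_mul_of_nonneg_right hcomp hC'0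
      _ = (C' * 2 ^ β) * (1 + ‖p‖) ^ (-β) := by ring
  -- integrability on the exterior
  have hfinrank : (Module.finrank ℝ (ℝ × ℝ) : ℝ) < β := by
    have h2 : Module.finrank ℝ (ℝ × ℝ) = 2 := by
      simp [Module.finrank_prod]
    rw [h2]; exact_mod_cast hβ
  have hmaj : Integrable (fun p : ℝ × ℝ => (C' * 2 ^ β) * (1 + ‖p‖) ^ (-β)) :=
    (integrable_one_add_norm hfinrank).const_mul _
  have hBc_ne : ∀ p ∈ Bᶜ, p ≠ (0 : ℝ × ℝ) := by
    intro p hp h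
    rw [Set.mem_compl_iff, hBdef, Set.mem_setOf_eq, not_le, h] at hp
    simp only [Prod.fst_zero, Prod.snd_zero] at hp
    norm_num at hp
  have hfext : IntegrableOn f Bᶜ := by
    apply Integrable.mono' hmaj.integrableOn
    · exact ((hcont.mono hBc_ne).aestronglyMeasurable hBmeas.compl)
    · rw [ae_restrict_iff' hBmeas.compl]
      apply ae_of_all
      intro p hp
      rw [Set.mem_compl_iff, hBdef, Set.mem_setOf_eq, not_le] at hp
      exact hnorm p hp
  have hext_one : ∀ p ∈ Bᶜ, f p = χ p • f p := by
    intro p hp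
    rw [Set.mem_compl_iff, hBdef, Set.mem_setOf_eq, not_le] at hp
    rw [hχ1 p hp.le, one_smul]
  have hgext : IntegrableOn (fun p => χ p • f p) Bᶜ :=
    hfext.congr_fun hext_one hBmeas.compl
  have hint : Integrable (fun p => χ p • f p) := by
    have := hgB.union hgext
    rwa [Set.union_compl_self, integrableOn_univ] at this
  refine ⟨hint, ?_⟩
  -- split the integral
  have hsplit : (∫ p, χ p • f p)
      = (∫ p in B, χ p • f p) + ∫ p in Bᶜ, χ p • f p :=
    (integral_add_compl hBmeas hint).symm
  have hBc_eq : (∫ p in Bᶜ, χ p • f p) = ∫ p in Bᶜ, f p :=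
    (setIntegral_congr_fun hBmeas.compl (fun p hp => (hext_one p hp).symm))
  -- polar coordinates on the exterior
  set g : ℝ → E := fun θ => f (Real.cos θ, Real.sin θ) with hgdef
  have htarget : polarCoord.target = Set.Ioi (0:ℝ) ×ˢ Set.Ioo (-π) π := rfl
  have hsymm_apply : ∀ q : ℝ × ℝ,
      polarCoord.symm q = q.1 • ((Real.cos q.2, Real.sin q.2) : ℝ × ℝ) := by
    intro q
    show (q.1 * Real.cos q.2, q.1 * Real.sin q.2) = _
    simp [Prod.smul_mk, smul_eq_mul]
  have hext : (∫ p in Bᶜ, f p)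
      = (-(α - ↑j + 2)⁻¹) • ∫ θ in (0:ℝ)..(2 * π), g θ := by
    rw [← integral_indicator hBmeas.compl, ← integral_comp_polarCoord_symm]
    have h2 : ∀ p ∈ polarCoord.target,
        p.1 • Set.indicator Bᶜ f (polarCoord.symm p)
          = Set.indicator (Set.Ioi (1:ℝ) ×ˢ Set.Ioo (-π) π)
              (fun q => q.1 ^ (α - ↑j + 1) • g q.2) p := by
      rintro ⟨ρ, θ⟩ hmem
      rw [htarget] at hmem
      obtain ⟨hρ, hθ⟩ := hmem
      simp only [Set.mem_Ioi] at hρ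
      have hrval : Real.sqrt ((polarCoord.symm (ρ, θ)).1 ^ 2 + (polarCoord.symm (ρ, θ)).2 ^ 2)
          = ρ := by
        rw [hsymm_apply (ρ, θ), r_smul ρ hρ.le]
        simp only [r_cs, mul_one]
      by_cases h : 1 < ρ
      · have hmemB : polarCoord.symm (ρ, θ) ∈ Bᶜ := by
          simp only [Set.mem_compl_iff, hBdef, Set.mem_setOf_eq, not_le, hrval]
          exact h
        have hmemT : ((ρ, θ) : ℝ × ℝ) ∈ Set.Ioi (1:ℝ) ×ˢ Set.Ioo (-π) π := ⟨h, hθ⟩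
        rw [Set.indicator_of_mem hmemB, Set.indicator_of_mem hmemT]
        rw [hsymm_apply (ρ, θ), hhom ρ hρ (Real.cos θ, Real.sin θ) (cs_ne_zero θ), smul_smul]
        congr 1
        rw [show ρ * ρ ^ (α - (j:ℝ)) = ρ ^ (1:ℝ) * ρ ^ (α - (j:ℝ)) from by
            rw [Real.rpow_one],
          ← Real.rpow_add hρ]
        ring_nf
      · have hmemB : polarCoord.symm (ρ, θ) ∉ Bᶜ := by
          simp only [Set.mem_compl_iff, hBdef, Set.mem_setOf_eq, not_le, hrval, not_lt]
          exact not_lt.mp h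
        have hmemT : ((ρ, θ) : ℝ × ℝ) ∉ Set.Ioi (1:ℝ) ×ˢ Set.Ioo (-π) π := fun hm => h hm.1
        rw [Set.indicator_of_notMem hmemB, Set.indicator_of_notMem hmemT, smul_zero]
    rw [setIntegral_congr_fun polarCoord.open_target.measurableSet h2,
      setIntegral_indicator (measurableSet_Ioi.prod measurableSet_Ioo)]
    have hinter : polarCoord.target ∩ (Set.Ioi (1:ℝ) ×ˢ Set.Ioo (-π) π)
        = Set.Ioi (1:ℝ) ×ˢ Set.Ioo (-π) π := by
      rw [Set.inter_eq_right, htarget]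
      exact Set.prod_mono (Set.Ioi_subset_Ioi (by norm_num)) subset_rfl
    rw [hinter, Measure.volume_eq_prod, ← Measure.prod_restrict,
      integral_prod_smul (fun ρ : ℝ => ρ ^ (α - (j:ℝ) + 1)) g,
      integral_Ioi_rpow_of_lt (by push_cast; linarith) one_pos]
    have h12 : α - (j:ℝ) + 1 + 1 = α - (j:ℝ) + 2 := by ring
    rw [h12, Real.one_rpow, neg_div, one_div]
    congr 1
    -- circle integral: from Ioo (-π) π to interval 0..2π
    have hper : Function.Periodic g (2 * π) := by
      intro θ
      simp only [hgdef, Real.cos_add_two_pi, Real.sin_add_two_pi]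
    have h3 : (∫ θ in Set.Ioo (-π) π, g θ) = ∫ θ in (-π)..π, g θ := by
      rw [intervalIntegral.integral_of_le (by linarith [Real.pi_pos]),
        integral_Ioc_eq_integral_Ioo]
    have h4 := hper.intervalIntegral_add_eq (-π) 0
    rw [h3]
    rw [show -π + 2 * π = π from by ring, zero_add] at h4
    rw [h4]
  rw [hsplit, hBc_eq, hext, neg_smul, ← sub_eq_add_neg]

private lemma main_aux {E : Type*} [NormedAddCommGroup E]
    [NormedSpace ℝ E] [CompleteSpace E]
    (α : ℝ) (N₁ N₂ : ℕ) (hN₁ : α + 1 < N₁) (hle : N₁ ≤ N₂)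
    (σ σN₁ σN₂ : ℝ × ℝ → E) (σhom : ℕ → ℝ × ℝ → E) (χ : ℝ × ℝ → ℝ)
    (hχsmooth : ContDiff ℝ (⊤ : ℕ∞) χ)
    (hχ0 : ∃ ε > (0:ℝ), ∀ p : ℝ × ℝ, Real.sqrt (p.1 ^ 2 + p.2 ^ 2) < ε → χ p = 0)
    (hχ1 : ∀ p : ℝ × ℝ, 1 ≤ Real.sqrt (p.1 ^ 2 + p.2 ^ 2) → χ p = 1)
    (hcont : ∀ j, ContinuousOn (σhom j) {p : ℝ × ℝ | p ≠ 0})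
    (hhom : ∀ j, ∀ c : ℝ, 0 < c → ∀ p : ℝ × ℝ, p ≠ 0 →
      σhom j (c • p) = c ^ (α - j) • σhom j p)
    (hσN₁ : Integrable σN₁) (hσN₂ : Integrable σN₂)
    (hdecomp₁ : ∀ ξ : ℝ × ℝ,
      σ ξ = (∑ j ∈ Finset.range (N₁ + 1), χ ξ • σhom j ξ) + σN₁ ξ)
    (hdecomp₂ : ∀ ξ : ℝ × ℝ,
      σ ξ = (∑ j ∈ Finset.range (N₂ + 1), χ ξ • σhom j ξ) + σN₂ ξ) :
    (∫ p : ℝ × ℝ, σN₁ p)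
      + (∑ j ∈ Finset.range (N₁ + 1),
          ∫ p in {p : ℝ × ℝ | Real.sqrt (p.1 ^ 2 + p.2 ^ 2) ≤ 1}, χ p • σhom j p)
      - (∑ j ∈ Finset.range (N₁ + 1),
          if α - j + 2 ≠ 0 then
            (α - j + 2)⁻¹ • ∫ θ in (0:ℝ)..(2 * π), σhom j (Real.cos θ, Real.sin θ)
          else 0)
    = (∫ p : ℝ × ℝ, σN₂ p)
      + (∑ j ∈ Finset.range (N₂ + 1),
          ∫ p in {p : ℝ × ℝ | Real.sqrt (p.1 ^ 2 + p.2 ^ 2) ≤ 1}, χ p • σhom j p)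
      - (∑ j ∈ Finset.range (N₂ + 1),
          if α - j + 2 ≠ 0 then
            (α - j + 2)⁻¹ • ∫ θ in (0:ℝ)..(2 * π), σhom j (Real.cos θ, Real.sin θ)
          else 0) := by
  have hj' : ∀ j ∈ Finset.Ico (N₁ + 1) (N₂ + 1), α + 2 < j := by
    intro j hj
    rw [Finset.mem_Ico] at hj
    have h1 : (N₁ : ℝ) + 1 ≤ j := by exact_mod_cast hj.1
    linarith
  have hkey := fun j (hj : j ∈ Finset.Ico (N₁ + 1) (N₂ + 1)) =>
    key α j (hj' j hj) (σhom j) χ hχsmooth.continuous ⟨_, hχ0.choose_spec.1, hχ0.choose_spec.2⟩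
      hχ1 (hcont j) (hhom j)
  have hInt : ∀ j ∈ Finset.Ico (N₁ + 1) (N₂ + 1), Integrable fun p => χ p • σhom j p :=
    fun j hj => (hkey j hj).1
  have hpt : ∀ ξ, σN₁ ξ = σN₂ ξ + ∑ j ∈ Finset.Ico (N₁ + 1) (N₂ + 1), χ ξ • σhom j ξ := by
    intro ξ
    have h1 := (hdecomp₁ ξ).symm.trans (hdecomp₂ ξ)
    rw [Finset.range_eq_Ico, Finset.range_eq_Ico,
      ← Finset.sum_Ico_consecutive (fun j => χ ξ • σhom j ξ) (Nat.zero_le (N₁ + 1))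
        (by omega : N₁ + 1 ≤ N₂ + 1)] at h1
    apply add_left_cancel (a := ∑ j ∈ Finset.Ico 0 (N₁ + 1), χ ξ • σhom j ξ)
    rw [h1]
    abel
  have hintegral : (∫ p, σN₁ p)
      = (∫ p, σN₂ p) + ∑ j ∈ Finset.Ico (N₁ + 1) (N₂ + 1), ∫ p, χ p • σhom j p := by
    rw [show σN₁ = fun ξ => σN₂ ξ + ∑ j ∈ Finset.Ico (N₁ + 1) (N₂ + 1), χ ξ • σhom j ξ from
      funext hpt]
    rw [integral_add hσN₂ (integrable_finset_sum _ hInt), integral_finset_sum _ hInt]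
  have hsplitB : ∀ F : ℕ → E, ∑ j ∈ Finset.range (N₂ + 1), F j
      = ∑ j ∈ Finset.range (N₁ + 1), F j + ∑ j ∈ Finset.Ico (N₁ + 1) (N₂ + 1), F j := by
    intro F
    rw [Finset.range_eq_Ico, Finset.range_eq_Ico,
      ← Finset.sum_Ico_consecutive F (Nat.zero_le (N₁ + 1)) (by omega : N₁ + 1 ≤ N₂ + 1)]
  have hif : ∀ j ∈ Finset.Ico (N₁ + 1) (N₂ + 1),
      (if α - j + 2 ≠ 0 then
          (α - j + 2)⁻¹ • ∫ θ in (0:ℝ)..(2 * π), σhom j (Real.cos θ, Real.sin θ)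
        else 0)
      = (α - j + 2)⁻¹ • ∫ θ in (0:ℝ)..(2 * π), σhom j (Real.cos θ, Real.sin θ) := by
    intro j hj
    have := hj' j hj
    exact if_pos (by intro h; linarith [h])
  have hterm : ∑ j ∈ Finset.Ico (N₁ + 1) (N₂ + 1), ∫ p, χ p • σhom j p
      = (∑ j ∈ Finset.Ico (N₁ + 1) (N₂ + 1),
          ∫ p in {p : ℝ × ℝ | Real.sqrt (p.1 ^ 2 + p.2 ^ 2) ≤ 1}, χ p • σhom j p)
        - ∑ j ∈ Finset.Ico (N₁ + 1) (N₂ + 1),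
            (α - j + 2)⁻¹ • ∫ θ in (0:ℝ)..(2 * π), σhom j (Real.cos θ, Real.sin θ) := by
    rw [← Finset.sum_sub_distrib]
    exact Finset.sum_congr rfl fun j hj => (hkey j hj).2
  rw [hintegral, hterm,
    hsplitB (fun j =>
      ∫ p in {p : ℝ × ℝ | Real.sqrt (p.1 ^ 2 + p.2 ^ 2) ≤ 1}, χ p • σhom j p),
    hsplitB (fun j =>
      if α - j + 2 ≠ 0 then
        (α - j + 2)⁻¹ • ∫ θ in (0:ℝ)..(2 * π), σhom j (Real.cos θ, Real.sin θ)
      else 0),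
    Finset.sum_congr rfl hif]
  abel

end Aux

/-- The cut-off integral (constant term of the asymptotic expansion of `∫_{B(R)} σ`),
given by `∫_{ℝ²}σ^N + Σ_{j≤N}∫_{B(1)} χσ_{α-j} − Σ_{j≤N, α-j+2≠0}(α-j+2)⁻¹∫_{S¹}σ_{α-j}`,
is independent of the choice of the integer `N` used in the decomposition
`σ = Σ_{j≤N} χσ_{α-j} + σ^N`. -/
theorem cutoff_integral_independent_of_N {E : Type*} [NormedAddCommGroup E]
    [NormedSpace ℝ E] [CompleteSpace E]
    (α : ℝ) (N₁ N₂ : ℕ) (hN₁ : α + 1 < N₁) (hN₂ : α + 1 < N₂)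
    (σ σN₁ σN₂ : ℝ × ℝ → E) (σhom : ℕ → ℝ × ℝ → E) (χ : ℝ × ℝ → ℝ)
    (hχsmooth : ContDiff ℝ (⊤ : ℕ∞) χ)
    (hχ0 : ∃ ε > (0:ℝ), ∀ p : ℝ × ℝ, Real.sqrt (p.1 ^ 2 + p.2 ^ 2) < ε → χ p = 0)
    (hχ1 : ∀ p : ℝ × ℝ, 1 ≤ Real.sqrt (p.1 ^ 2 + p.2 ^ 2) → χ p = 1)
    (hχrange : ∀ p, 0 ≤ χ p ∧ χ p ≤ 1)
    (hcont : ∀ j, ContinuousOn (σhom j) {p : ℝ × ℝ | p ≠ 0})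
    (hhom : ∀ j, ∀ c : ℝ, 0 < c → ∀ p : ℝ × ℝ, p ≠ 0 →
      σhom j (c • p) = c ^ (α - j) • σhom j p)
    (hσN₁ : Integrable σN₁) (hσN₂ : Integrable σN₂)
    (hdecomp₁ : ∀ ξ : ℝ × ℝ,
      σ ξ = (∑ j ∈ Finset.range (N₁ + 1), χ ξ • σhom j ξ) + σN₁ ξ)
    (hdecomp₂ : ∀ ξ : ℝ × ℝ,
      σ ξ = (∑ j ∈ Finset.range (N₂ + 1), χ ξ • σhom j ξ) + σN₂ ξ) :
    (∫ p : ℝ × ℝ, σN₁ p)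
      + (∑ j ∈ Finset.range (N₁ + 1),
          ∫ p in {p : ℝ × ℝ | Real.sqrt (p.1 ^ 2 + p.2 ^ 2) ≤ 1}, χ p • σhom j p)
      - (∑ j ∈ Finset.range (N₁ + 1),
          if α - j + 2 ≠ 0 then
            (α - j + 2)⁻¹ • ∫ θ in (0:ℝ)..(2 * π), σhom j (Real.cos θ, Real.sin θ)
          else 0)
    = (∫ p : ℝ × ℝ, σN₂ p)
      + (∑ j ∈ Finset.range (N₂ + 1),
          ∫ p in {p : ℝ × ℝ | Real.sqrt (p.1 ^ 2 + p.2 ^ 2) ≤ 1}, χ p • σhom j p)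
      - (∑ j ∈ Finset.range (N₂ + 1),
          if α - j + 2 ≠ 0 then
            (α - j + 2)⁻¹ • ∫ θ in (0:ℝ)..(2 * π), σhom j (Real.cos θ, Real.sin θ)
          else 0) := by
  rcases le_total N₁ N₂ with hle | hle
  · exact main_aux α N₁ N₂ hN₁ hle σ σN₁ σN₂ σhom χ hχsmooth hχ0 hχ1 hcont hhom
      hσN₁ hσN₂ hdecomp₁ hdecomp₂
  · exact (main_aux α N₂ N₁ hN₂ hle σ σN₂ σN₁ σhom χ hχsmooth hχ0 hχ1 hcont hhom
      hσN₂ hσN₁ hdecomp₂ hdecomp₁).symm
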